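/- arXiv:2210.14688 — 2 statements merged into one kernel-verified Lean document; each statement's English description precedes it below -/
import Mathlib

section
/- Let $R > 0$, $P_0 > 0$, $d_0 > 0$, and $\gamma > 2$. There exists a constant $C > 0$ depending only on $\gamma$, $P_0$, $d_0$, and $R$ such that the following holds: for any positive integers $B$ and $N$, any points $p_1, \ldots, p_B \in \mathbb{R}^2$ whose pairwise Euclidean distances are at least $\sqrt{3} R$ (the centers of hexagonal cells of radius $R$), any points $q_{jn} \in \mathbb{R}^2$ for $1 \le j \le B$, $1 \le n \le N$ with $\|q_{jn} - p_j\| \le R$ (the device positions, each lying in its own cell), and any index $b \in \{1,\ldots,B\}$, one has $\sum_{j=1, j \ne b}^{B} \max_{1 \le n \le N} P_0 \left( \frac{d_0}{\|p_b - q_{jn}\|} \right)^{\gamma} \le C$. -/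
open Metric MeasureTheory Finset

lemma annulus_count {B : ℕ} (r : ℝ) (hr : 0 < r) (k : ℕ) (hk : 1 ≤ k)
    (p : Fin B → EuclideanSpace ℝ (Fin 2)) (b : Fin B)
    (hsep : ∀ j j', j ≠ j' → r ≤ dist (p j) (p j'))
    (T : Finset (Fin B))
    (hT : ∀ j ∈ T, (k : ℝ) * r ≤ dist (p b) (p j) ∧ dist (p b) (p j) < ((k : ℝ) + 1) * r) :
    (T.card : ℝ) ≤ 16 * k + 8 := by
  have hk1 : (1 : ℝ) ≤ (k : ℝ) := by exact_mod_cast hk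
  set μ := (volume : Measure (EuclideanSpace ℝ (Fin 2)))
  set inner : Set (EuclideanSpace ℝ (Fin 2)) := ball (p b) (((k : ℝ) - 1/2) * r)
  set U : Set (EuclideanSpace ℝ (Fin 2)) := ⋃ j ∈ T, ball (p j) (r/2)
  -- pairwise disjointness of small balls
  have hdisj : (T : Set (Fin B)).PairwiseDisjoint (fun j => ball (p j) (r/2)) := by
    intro j hj j' hj' hne
    exact ball_disjoint_ball (by linarith [hsep j j' hne])
  have hdisjU : Disjoint inner U := by
    refine Set.disjoint_iUnion₂_right.mpr fun j hj => ?_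
    refine ball_disjoint_ball ?_
    have := (hT j hj).1
    linarith
  have hsub : inner ∪ U ⊆ closedBall (p b) (((k : ℝ) + 3/2) * r) := by
    apply Set.union_subset
    · exact (ball_subset_closedBall).trans (closedBall_subset_closedBall (by linarith))
    · refine Set.iUnion₂_subset fun j hj => ?_
      intro x hx
      have h1 : dist x (p j) < r / 2 := mem_ball.mp hx
      have h2 := (hT j hj).2
      have : dist x (p b) ≤ dist x (p j) + dist (p j) (p b) := dist_triangle _ _ _
      rw [mem_closedBall]
      rw [dist_comm (p j) (p b)] at this
      linarith
  have hU : μ U = ∑ j ∈ T, μ (ball (p j) (r/2)) :=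
    measure_biUnion_finset hdisj fun j _ => measurableSet_ball
  have hmeas : μ inner + μ U ≤ μ (closedBall (p b) (((k : ℝ) + 3/2) * r)) := by
    rw [← measure_union hdisjU (MeasurableSet.biUnion T.countable_toSet
      fun j _ => measurableSet_ball)]
    exact measure_mono hsub
  -- volumes
  set v := μ (ball (0 : EuclideanSpace ℝ (Fin 2)) 1) with hv
  have hfin : Module.finrank ℝ (EuclideanSpace ℝ (Fin 2)) = 2 := finrank_euclideanSpace_fin
  have hball : ∀ (x : EuclideanSpace ℝ (Fin 2)) (ρ : ℝ), 0 ≤ ρ →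
      μ (ball x ρ) = ENNReal.ofReal (ρ ^ 2) * v := by
    intro x ρ hρ
    rw [Measure.addHaar_ball μ x hρ, hfin]
  have hcball : μ (closedBall (p b) (((k : ℝ) + 3/2) * r))
      = ENNReal.ofReal ((((k : ℝ) + 3/2) * r) ^ 2) * v := by
    rw [Measure.addHaar_closedBall μ _ (by positivity), hfin]
  have hv0 : v ≠ 0 := (measure_ball_pos μ 0 one_pos).ne'
  have hvt : v ≠ ⊤ := measure_ball_lt_top.ne
  have ha : (0:ℝ) ≤ ((k : ℝ) - 1/2) * r := by nlinarith
  rw [hU, hcball, hball _ _ ha] at hmeas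
  have hsum : ∑ j ∈ T, μ (ball (p j) (r/2)) = (T.card : ENNReal) * (ENNReal.ofReal ((r/2)^2) * v) := by
    rw [Finset.sum_congr rfl fun j _ => hball (p j) (r/2) (by positivity)]
    simp [Finset.sum_const, nsmul_eq_mul]
  rw [hsum] at hmeas
  have key : ENNReal.ofReal ((((k:ℝ) - 1/2)*r)^2) + (T.card : ENNReal) * ENNReal.ofReal ((r/2)^2)
      ≤ ENNReal.ofReal ((((k:ℝ) + 3/2)*r)^2) := by
    rw [← ENNReal.mul_le_mul_iff_left hv0 hvt, add_mul, mul_assoc]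
    exact hmeas
  have key2 : (((k:ℝ) - 1/2)*r)^2 + (T.card : ℝ) * ((r/2)^2) ≤ (((k:ℝ) + 3/2)*r)^2 := by
    have : ENNReal.ofReal ((((k:ℝ) - 1/2)*r)^2 + (T.card : ℝ) * ((r/2)^2))
        ≤ ENNReal.ofReal ((((k:ℝ) + 3/2)*r)^2) := by
      rw [ENNReal.ofReal_add (by positivity) (by positivity), ENNReal.ofReal_mul (by positivity)]
      simpa using key
    exact (ENNReal.ofReal_le_ofReal_iff (by positivity)).mp this
  nlinarith [mul_pos hr hr, sq_nonneg r]

/-- Path-loss lemma: in a multi-cell system whose base stations `p 1, …, p B ∈ ℝ²`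
are mutually separated by at least `√3 R` (hexagonal cells of radius `R`), where each
device `q j n` lies within distance `R` of its own base station `p j`, and the
large-scale fading coefficient is `P₀ (d₀ / dist)^γ` with path-loss exponent `γ > 2`,
the aggregate maximal inter-cell fading seen by any base station `b` is bounded by a
constant `C` depending only on `γ, P₀, d₀, R` (independent of `B` and `N`). -/
theorem intercell_fading_sum_bounded
    (R P₀ d₀ γ : ℝ) (hR : 0 < R) (hP₀ : 0 < P₀) (hd₀ : 0 < d₀) (hγ : 2 < γ) :
    ∃ C : ℝ, 0 < C ∧
      ∀ (B N : ℕ), 0 < B → 0 < N →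
      ∀ (p : Fin B → EuclideanSpace ℝ (Fin 2))
        (q : Fin B → Fin N → EuclideanSpace ℝ (Fin 2)),
        (∀ j j', j ≠ j' → Real.sqrt 3 * R ≤ dist (p j) (p j')) →
        (∀ j n, dist (q j n) (p j) ≤ R) →
        ∀ b : Fin B,
          ∑ j ∈ Finset.univ.erase b, (⨆ n : Fin N, P₀ * (d₀ / dist (p b) (q j n)) ^ γ) ≤ C := by
  have hs3 : (1 : ℝ) < Real.sqrt 3 := by
    have : Real.sqrt 1 < Real.sqrt 3 := Real.sqrt_lt_sqrt (by norm_num) (by norm_num)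
    simpa using this
  set r : ℝ := Real.sqrt 3 * R with hrdef
  have hr : 0 < r := by positivity
  set α : ℝ := r - R with hαdef
  have hα : 0 < α := by
    have : R < r := by
      have := mul_lt_mul_of_pos_right hs3 hR
      simpa using this
    simp [hαdef]; linarith
  set c : ℝ := d₀ / α with hcdef
  have hc : 0 < c := div_pos hd₀ hα
  have hsummable : Summable (fun k : ℕ => (k : ℝ) ^ ((1:ℝ) - γ)) :=
    Real.summable_nat_rpow.mpr (by linarith)
  set S : ℝ := ∑' k : ℕ, (k : ℝ) ^ ((1:ℝ) - γ) with hSdef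
  have hS0 : 0 ≤ S := tsum_nonneg fun k => Real.rpow_nonneg (Nat.cast_nonneg k) _
  refine ⟨24 * (P₀ * c ^ γ) * S + 1, by positivity, ?_⟩
  intro B N hB hN p q hsep hq b
  haveI : Nonempty (Fin N) := Fin.pos_iff_nonempty.mp hN
  classical
  set K : Fin B → ℕ := fun j => ⌊dist (p b) (p j) / r⌋₊ with hKdef
  -- properties of K on erase b
  have hKprop : ∀ j ∈ Finset.univ.erase b, 1 ≤ K j ∧ (K j : ℝ) * r ≤ dist (p b) (p j) ∧
      dist (p b) (p j) < ((K j : ℝ) + 1) * r := by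
    intro j hj
    have hjb : j ≠ b := Finset.ne_of_mem_erase hj
    have hd : r ≤ dist (p b) (p j) := hsep b j (Ne.symm hjb)
    have hd0 : 0 ≤ dist (p b) (p j) / r := div_nonneg dist_nonneg hr.le
    refine ⟨?_, ?_, ?_⟩
    · exact Nat.le_floor (by rw [Nat.cast_one, le_div_iff₀ hr]; linarith)
    · rw [← le_div_iff₀ hr]; exact Nat.floor_le hd0
    · have := Nat.lt_floor_add_one (dist (p b) (p j) / r)
      rw [div_lt_iff₀ hr] at this
      simpa using this
  -- per-term bound
  have hterm : ∀ j ∈ Finset.univ.erase b,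
      (⨆ n : Fin N, P₀ * (d₀ / dist (p b) (q j n)) ^ γ) ≤ P₀ * c ^ γ * (K j : ℝ) ^ (-γ) := by
    intro j hj
    obtain ⟨hK1, hKl, _⟩ := hKprop j hj
    have hK1' : (1 : ℝ) ≤ (K j : ℝ) := by exact_mod_cast hK1
    refine ciSup_le fun n => ?_
    have hdd : (K j : ℝ) * α ≤ dist (p b) (q j n) := by
      have h1 := dist_triangle (p b) (q j n) (p j)
      rw [dist_comm (q j n) (p j)] at h1
      have h2 := hq j n
      rw [dist_comm (q j n) (p j)] at h2
      have : (K j : ℝ) * r - R ≤ dist (p b) (q j n) := by linarith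
      have h3 : (K j : ℝ) * α ≤ (K j : ℝ) * r - R := by
        have : (K j : ℝ) * α = (K j : ℝ) * r - (K j : ℝ) * R := by rw [hαdef]; ring
        rw [this]
        nlinarith
      linarith
    have hdpos : 0 < dist (p b) (q j n) := lt_of_lt_of_le (by positivity) hdd
    have hdiv : d₀ / dist (p b) (q j n) ≤ c / (K j : ℝ) := by
      rw [hcdef, div_div]
      exact div_le_div_of_nonneg_left hd₀.le (by positivity) (by rw [mul_comm]; exact hdd)
    have hrpow : (d₀ / dist (p b) (q j n)) ^ γ ≤ (c / (K j : ℝ)) ^ γ :=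
      Real.rpow_le_rpow (by positivity) hdiv (by linarith)
    have heq : (c / (K j : ℝ)) ^ γ = c ^ γ * (K j : ℝ) ^ (-γ) := by
      rw [Real.div_rpow hc.le (by positivity), Real.rpow_neg (by positivity), div_eq_mul_inv]
    calc P₀ * (d₀ / dist (p b) (q j n)) ^ γ ≤ P₀ * (c / (K j : ℝ)) ^ γ := by
          exact mul_le_mul_of_nonneg_left hrpow hP₀.le
      _ = P₀ * c ^ γ * (K j : ℝ) ^ (-γ) := by rw [heq]; ring
  set φ : ℕ → ℝ := fun k => P₀ * c ^ γ * (k : ℝ) ^ (-γ) with hφdef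
  set h : ℕ → ℝ := fun k => 24 * (P₀ * c ^ γ) * (k : ℝ) ^ ((1:ℝ) - γ) with hhdef
  calc ∑ j ∈ Finset.univ.erase b, (⨆ n : Fin N, P₀ * (d₀ / dist (p b) (q j n)) ^ γ)
      ≤ ∑ j ∈ Finset.univ.erase b, φ (K j) := Finset.sum_le_sum hterm
    _ = ∑ k ∈ (Finset.univ.erase b).image K,
          ({j ∈ Finset.univ.erase b | K j = k}).card • φ k := Finset.sum_comp φ K
    _ ≤ ∑ k ∈ (Finset.univ.erase b).image K, h k := by
        refine Finset.sum_le_sum fun k hk => ?_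
        obtain ⟨j₀, hj₀, hj₀k⟩ := Finset.mem_image.mp hk
        have hk1 : 1 ≤ k := hj₀k ▸ (hKprop j₀ hj₀).1
        have hk1' : (1 : ℝ) ≤ (k : ℝ) := by exact_mod_cast hk1
        have hcard : (({j ∈ Finset.univ.erase b | K j = k}).card : ℝ) ≤ 16 * k + 8 := by
          refine annulus_count r hr k hk1 p b hsep _ fun j hj => ?_
          rw [Finset.mem_filter] at hj
          obtain ⟨hj1, hj2⟩ := hj
          obtain ⟨_, h2, h3⟩ := hKprop j hj1
          rw [hj2] at h2 h3
          exact ⟨h2, h3⟩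
        have hφpos : 0 ≤ φ k := by
          refine mul_nonneg (by positivity) (Real.rpow_nonneg (Nat.cast_nonneg k) _)
        rw [nsmul_eq_mul]
        have hstep : (({j ∈ Finset.univ.erase b | K j = k}).card : ℝ) * φ k
            ≤ (24 * k) * φ k := by
          refine mul_le_mul_of_nonneg_right (hcard.trans ?_) hφpos
          nlinarith
        refine hstep.trans ?_
        have hkk : (k : ℝ) ^ ((1:ℝ) - γ) = (k : ℝ) * (k : ℝ) ^ (-γ) := by
          rw [show (1:ℝ) - γ = 1 + (-γ) by ring, Real.rpow_add (by linarith), Real.rpow_one]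
        show 24 * (k:ℝ) * (P₀ * c ^ γ * (k:ℝ) ^ (-γ)) ≤ 24 * (P₀ * c ^ γ) * (k:ℝ) ^ ((1:ℝ) - γ)
        rw [hkk]; exact le_of_eq (by ring)
    _ ≤ ∑' k : ℕ, h k := by
        refine Summable.sum_le_tsum _ (fun k _ => ?_) (hsummable.mul_left _)
        exact mul_nonneg (by positivity) (Real.rpow_nonneg (Nat.cast_nonneg k) _)
    _ = 24 * (P₀ * c ^ γ) * S := by rw [hhdef, hSdef]; exact tsum_mul_left
    _ ≤ 24 * (P₀ * c ^ γ) * S + 1 := by linarith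
end

section
/- Let $L, N, B, K$ be positive integers, and for $b=1,\ldots,B$ let $\mathcal{A}_b \subseteq \{(b-1)N+1,\ldots,bN\}$ be index sets with $|\mathcal{A}_b| = K$, and let $\mathcal{I} = \{1,\ldots,BN\} \setminus \bigcup_{b=1}^B \mathcal{A}_b$. Let $\mathbf{S} \in \mathbb{C}^{L \times BN}$ have columns $\mathbf{s}_1,\ldots,\mathbf{s}_{BN}$, each satisfying $\|\mathbf{s}_i\|_2^2 = L$. For $b=1,\ldots,B$ let $\mathbf{G}_b = \operatorname{diag}(g_{b,1},\ldots,g_{b,BN})$ be diagonal matrices with strictly positive diagonal entries, and suppose there exist constants $D > 0$ and $C > 0$ such that (i) $g_{b,i} \ge D$ for every $b$ and every $i \in \{(b-1)N+1,\ldots,bN\}$, and (ii) $\sum_{j \ne b} \max_{(j-1)N+1 \le i \le jN} g_{b,i} \le C$ for every $b$. Suppose $\widetilde{\mathbf{S}}$ satisfies the stable null space property of order $K$ with parameter $\rho$ for some $0 < \rho < \frac{D}{D + 2C}$, i.e., for every $\mathbf{v} \in \mathbb{R}^{BN}$ with $\widetilde{\mathbf{S}} \mathbf{v} = \mathbf{0}$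 and every index set $\mathcal{K}$ with $|\mathcal{K}| \le K$, one has $\|\mathbf{v}_{\mathcal{K}}\|_1 \le \rho \|\mathbf{v}_{\mathcal{K}^c}\|_1$. Then the only vector $\mathbf{x} \in \mathbb{R}^{BN}$ satisfying both $\widetilde{\mathbf{S}} \mathbf{G}_b \mathbf{x} = \mathbf{0}$ for all $b = 1,\ldots,B$ and the sign condition ($x_i \ge 0$ for $i \in \mathcal{I}$ and $x_i \le 0$ for $i \notin \mathcal{I}$) is $\mathbf{x} = \mathbf{0}$. -/
open scoped ComplexConjugate

/-- Given the columns `s i` of a matrix `S ∈ ℂ^{L×BN}` (devices indexed by pairs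
`(b, n)` of a cell and a device in that cell), `colKron s` is the matrix
`S̃ = [s₁* ⊗ s₁, …] ∈ ℂ^{L²×BN}` whose `i`-th column is the Kronecker product of the
conjugate of the `i`-th column of `S` with itself. -/
noncomputable def colKron {L B N : ℕ} (s : Fin B × Fin N → EuclideanSpace ℂ (Fin L)) :
    Matrix (Fin L × Fin L) (Fin B × Fin N) ℂ :=
  fun kl i => conj (s i kl.1) * s i kl.2

theorem zero_sum_aux (L N B : ℕ) (hL : 0 < L)
    (s : Fin B × Fin N → EuclideanSpace ℂ (Fin L))
    (hs : ∀ i, ‖s i‖ ^ 2 = (L : ℝ))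
    (v : Fin B × Fin N → ℝ)
    (hv : (colKron s).mulVec (fun p => (v p : ℂ)) = 0) :
    ∑ p : Fin B × Fin N, v p = 0 := by
  have h1 : ∀ k : Fin L, ∑ p : Fin B × Fin N, conj (s p k) * s p k * (v p : ℂ) = 0 := by
    intro k
    have := congrFun hv (k, k)
    simpa [Matrix.mulVec, dotProduct, colKron] using this
  have h2 : ((L : ℝ) : ℂ) * ∑ p : Fin B × Fin N, (v p : ℂ) = 0 := by
    calc ((L : ℝ) : ℂ) * ∑ p : Fin B × Fin N, (v p : ℂ)
        = ∑ p : Fin B × Fin N, (∑ k : Fin L, conj (s p k) * s p k) * (v p : ℂ) := by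
          rw [Finset.mul_sum]
          refine Finset.sum_congr rfl fun p _ => ?_
          congr 1
          have h5 : ∑ k : Fin L, conj (s p k) * s p k = ((∑ k, ‖s p k‖^2 : ℝ) : ℂ) := by
            push_cast
            refine Finset.sum_congr rfl fun k _ => ?_
            rw [Complex.conj_mul']
          have h6 : ∑ k, ‖s p k‖^2 = (L : ℝ) := by
            rw [← hs p, PiLp.norm_sq_eq_of_L2]
          rw [h5, h6]
      _ = ∑ k : Fin L, ∑ p : Fin B × Fin N, conj (s p k) * s p k * (v p : ℂ) := by
          rw [Finset.sum_comm]
          refine Finset.sum_congr rfl fun p _ => ?_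
          rw [Finset.sum_mul]
      _ = 0 := by simp [h1]
  have hLne : ((L : ℝ) : ℂ) ≠ 0 := by simp [hL.ne']
  have h3 : ∑ p : Fin B × Fin N, (v p : ℂ) = 0 := by
    rcases mul_eq_zero.mp h2 with h | h
    · exact absurd h hLne
    · exact h
  have h4 : ((∑ p : Fin B × Fin N, v p : ℝ) : ℂ) = 0 := by push_cast; exact h3
  exact_mod_cast h4


/-- Deterministic core of the scaling-law theorem.  Devices are indexed by pairs
`(j, n) : Fin B × Fin N` (device `n` of cell `j`); `A b` is the set of `K` active
devices of cell `b` and the inactive index set `ℐ` consists of the pairs `(j, n)`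
with `n ∉ A j`.  Each column of `S` has squared norm `L`; the diagonal matrices
`G_b` have strictly positive diagonal entries `g b (j, n)` satisfying the within-cell
lower bound `D` and the aggregate inter-cell upper bound `C`; and `S̃` has the stable
null space property of order `K` with parameter `ρ < D/(D+2C)`.  Then the only
vector `x` with `S̃ G_b x = 0` for all `b` that is nonnegative on `ℐ` and nonpositive
outside of `ℐ` is `x = 0`. -/
theorem nullspace_cone_trivial_of_nsp
    (L N B K : ℕ) (hL : 0 < L) (hN : 0 < N) (hB : 0 < B) (hK : 0 < K)
    (s : Fin B × Fin N → EuclideanSpace ℂ (Fin L))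
    (hs : ∀ i, ‖s i‖ ^ 2 = (L : ℝ))
    (A : Fin B → Finset (Fin N)) (hA : ∀ b, (A b).card = K)
    (g : Fin B → Fin B × Fin N → ℝ) (hgpos : ∀ b p, 0 < g b p)
    (D C : ℝ) (hD : 0 < D) (hC : 0 < C)
    (hgD : ∀ b n, D ≤ g b (b, n))
    (hgC : ∀ b, ∑ j ∈ Finset.univ.erase b, (⨆ n : Fin N, g b (j, n)) ≤ C)
    (ρ : ℝ) (hρ0 : 0 < ρ) (hρ1 : ρ < D / (D + 2 * C))
    (hNSP : ∀ v : Fin B × Fin N → ℝ,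
      (colKron s).mulVec (fun p => (v p : ℂ)) = 0 →
      ∀ K' : Finset (Fin B × Fin N), K'.card ≤ K →
        (∑ i ∈ K', |v i|) ≤ ρ * ∑ i ∈ K'ᶜ, |v i|)
    (x : Fin B × Fin N → ℝ)
    (hx : ∀ b, (colKron s).mulVec (fun p => ((g b p * x p : ℝ) : ℂ)) = 0)
    (hxpos : ∀ p : Fin B × Fin N, p.2 ∉ A p.1 → 0 ≤ x p)
    (hxneg : ∀ p : Fin B × Fin N, p.2 ∈ A p.1 → x p ≤ 0) :
    x = 0 := by
  classical
  haveI : Nonempty (Fin B) := ⟨⟨0, hB⟩⟩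
  haveI : Nonempty (Fin N) := ⟨⟨0, hN⟩⟩
  set Act : Finset (Fin B × Fin N) := Finset.univ.filter (fun p => p.2 ∈ A p.1) with hActdef
  have hmemAct : ∀ p : Fin B × Fin N, p ∈ Act ↔ p.2 ∈ A p.1 := by
    intro p; simp [hActdef]
  -- zero sum for each b
  have hzero : ∀ b, ∑ p : Fin B × Fin N, g b p * x p = 0 := fun b =>
    zero_sum_aux L N B hL s hs _ (hx b)
  -- Total = 2 * Agb
  have hTotal : ∀ b, ∑ p : Fin B × Fin N, g b p * |x p|
      = 2 * ∑ p ∈ Act, g b p * |x p| := by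
    intro b
    have hsplit := Finset.sum_add_sum_compl Act (fun p => g b p * x p)
    have hsplit2 := Finset.sum_add_sum_compl Act (fun p => g b p * |x p|)
    have e1 : ∑ p ∈ Act, g b p * x p = -∑ p ∈ Act, g b p * |x p| := by
      rw [← Finset.sum_neg_distrib]
      refine Finset.sum_congr rfl fun p hp => ?_
      rw [abs_of_nonpos (hxneg p ((hmemAct p).mp hp))]; ring
    have e2 : ∑ p ∈ Actᶜ, g b p * x p = ∑ p ∈ Actᶜ, g b p * |x p| := by
      refine Finset.sum_congr rfl fun p hp => ?_
      have hp' : p.2 ∉ A p.1 := by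
        have := Finset.mem_compl.mp hp
        simpa [hmemAct] using this
      rw [abs_of_nonneg (hxpos p hp')]
    rw [e1, e2] at hsplit
    rw [hzero b] at hsplit
    linarith [hsplit2, hsplit]
  -- per-cell active absolute sums
  set a : Fin B → ℝ := fun j => ∑ n ∈ A j, |x (j, n)| with hadef
  have ha_nonneg : ∀ j, 0 ≤ a j :=
    fun j => Finset.sum_nonneg fun n _ => abs_nonneg _
  obtain ⟨b0, -, hb0max⟩ := Finset.exists_max_image Finset.univ a ⟨Classical.arbitrary _, Finset.mem_univ _⟩
  have hb0max' : ∀ j, a j ≤ a b0 := fun j => hb0max j (Finset.mem_univ j)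
  -- double-sum form of the active sum
  have hAgb_eq : ∀ b, ∑ p ∈ Act, g b p * |x p|
      = ∑ j : Fin B, ∑ n ∈ A j, g b (j, n) * |x (j, n)| := by
    intro b
    rw [hActdef, Finset.sum_filter, Fintype.sum_prod_type]
    refine Finset.sum_congr rfl fun j _ => ?_
    simp [Finset.sum_ite_mem]
  set T : ℝ := ∑ n ∈ A b0, g b0 (b0, n) * |x (b0, n)| with hTdef
  set Agb : ℝ := ∑ p ∈ Act, g b0 p * |x p| with hAgbdef
  -- NSP application with K' = {b0} ×ˢ A b0
  have hKcard : (({b0} : Finset (Fin B)) ×ˢ A b0).card ≤ K := by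
    rw [Finset.card_product, Finset.card_singleton, one_mul, hA]
  have hnsp := hNSP (fun p => g b0 p * x p) (hx b0) _ hKcard
  have habsgx : ∀ b (p : Fin B × Fin N), |g b p * x p| = g b p * |x p| := by
    intro b p; rw [abs_mul, abs_of_pos (hgpos b p)]
  have hLHS : ∑ p ∈ ({b0} : Finset (Fin B)) ×ˢ A b0, |g b0 p * x p| = T := by
    rw [Finset.sum_product, Finset.sum_singleton, hTdef]
    exact Finset.sum_congr rfl fun n _ => habsgx b0 (b0, n)
  have hRHS : ∑ p ∈ (({b0} : Finset (Fin B)) ×ˢ A b0)ᶜ, |g b0 p * x p|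
      = 2 * Agb - T := by
    have hsplit := Finset.sum_add_sum_compl (({b0} : Finset (Fin B)) ×ˢ A b0)
      (fun p => |g b0 p * x p|)
    have htot : ∑ p : Fin B × Fin N, |g b0 p * x p| = 2 * Agb := by
      rw [← hTotal b0]
      exact Finset.sum_congr rfl fun p _ => habsgx b0 p
    rw [hLHS, htot] at hsplit
    linarith
  rw [hLHS, hRHS] at hnsp
  -- bound Agb ≤ T + C * a b0
  have hAgb_le : Agb ≤ T + C * a b0 := by
    rw [hAgbdef, hAgb_eq b0]
    have hsplit := Finset.sum_erase_add Finset.univ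
      (fun j => ∑ n ∈ A j, g b0 (j, n) * |x (j, n)|) (Finset.mem_univ b0)
    rw [← hsplit]
    have hbound : ∑ j ∈ Finset.univ.erase b0, ∑ n ∈ A j, g b0 (j, n) * |x (j, n)|
        ≤ C * a b0 := by
      have step1 : ∀ j, ∑ n ∈ A j, g b0 (j, n) * |x (j, n)|
          ≤ (⨆ n : Fin N, g b0 (j, n)) * a j := by
        intro j
        rw [hadef, Finset.mul_sum]
        refine Finset.sum_le_sum fun n _ => ?_
        refine mul_le_mul_of_nonneg_right ?_ (abs_nonneg _)
        exact le_ciSup (f := fun n : Fin N => g b0 (j, n))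
          (Set.Finite.bddAbove (Set.finite_range _)) n
      have step2 : ∀ j, (⨆ n : Fin N, g b0 (j, n)) * a j
          ≤ (⨆ n : Fin N, g b0 (j, n)) * a b0 := by
        intro j
        have hM : 0 ≤ ⨆ n : Fin N, g b0 (j, n) :=
          le_trans (hgpos b0 (j, Classical.arbitrary _)).le
            (le_ciSup (f := fun n : Fin N => g b0 (j, n))
              (Set.Finite.bddAbove (Set.finite_range _)) _)
        exact mul_le_mul_of_nonneg_left (hb0max' j) hM
      calc ∑ j ∈ Finset.univ.erase b0, ∑ n ∈ A j, g b0 (j, n) * |x (j, n)|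
          ≤ ∑ j ∈ Finset.univ.erase b0, (⨆ n : Fin N, g b0 (j, n)) * a b0 :=
            Finset.sum_le_sum fun j _ => le_trans (step1 j) (step2 j)
        _ = (∑ j ∈ Finset.univ.erase b0, ⨆ n : Fin N, g b0 (j, n)) * a b0 := by
            rw [Finset.sum_mul]
        _ ≤ C * a b0 := mul_le_mul_of_nonneg_right (hgC b0) (ha_nonneg b0)
    linarith
  -- D * a b0 ≤ T
  have hDa : D * a b0 ≤ T := by
    rw [hTdef, hadef, Finset.mul_sum]
    exact Finset.sum_le_sum fun n _ =>
      mul_le_mul_of_nonneg_right (hgD b0 n) (abs_nonneg _)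
  -- ρ arithmetic
  have hρDC : ρ * (D + 2 * C) < D := by
    rw [lt_div_iff₀ (by positivity)] at hρ1
    exact hρ1
  have hρlt1 : ρ < 1 := by nlinarith
  -- conclude a b0 = 0
  have ha0 : a b0 = 0 := by
    have hle : a b0 ≤ 0 := by
      nlinarith [mul_le_mul_of_nonneg_left hAgb_le hρ0.le,
        mul_le_mul_of_nonneg_left hDa (by linarith : (0:ℝ) ≤ 1 - ρ)]
    linarith [ha_nonneg b0]
  have haj : ∀ j, a j = 0 := fun j => le_antisymm (ha0 ▸ hb0max' j) (ha_nonneg j)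
  -- active entries vanish
  have hactive0 : ∀ p : Fin B × Fin N, p.2 ∈ A p.1 → x p = 0 := by
    intro p hp
    have h1 : |x (p.1, p.2)| ≤ a p.1 := by
      rw [hadef]
      exact Finset.single_le_sum (f := fun n => |x (p.1, n)|)
        (fun n _ => abs_nonneg _) hp
    rw [haj p.1] at h1
    have := abs_nonneg (x p)
    have : |x p| = 0 := le_antisymm h1 this
    exact abs_eq_zero.mp this
  -- now the full vector vanishes
  have hAgb0 : ∑ p ∈ Act, g b0 p * |x p| = 0 := by
    refine Finset.sum_eq_zero fun p hp => ?_
    rw [hactive0 p ((hmemAct p).mp hp)]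
    simp
  have hTot0 : ∑ p : Fin B × Fin N, g b0 p * |x p| = 0 := by
    rw [hTotal b0, hAgb0]; ring
  funext p
  have hterm := (Finset.sum_eq_zero_iff_of_nonneg
    (fun q _ => mul_nonneg (hgpos b0 q).le (abs_nonneg (x q)))).mp hTot0 p (Finset.mem_univ p)
  have : |x p| = 0 := by
    rcases mul_eq_zero.mp hterm with h | h
    · exact absurd h (hgpos b0 p).ne'
    · exact h
  simpa using abs_eq_zero.mp this
end
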